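/- arXiv:math/0203111 — 2 statements merged into one kernel-verified Lean document; each statement's English description precedes it below -/
import Mathlib

section
/- For every integer m ≥ 0, Q_m(q) + q^{m+1} Q_{m+3}(q) = q^{m+1}/(q;q)_∞. -/
/-!
Dyson's map sends a partition `μ` of `n` with rank at most `m + 2` to the partition of
`n + m + 1` obtained by deleting the first column of `μ` and adding a part `#μ + m + 1`; it is a
bijection onto the partitions of `n + m + 1` of rank at least `m`. Writing `N(r, k)` for the number
of partitions of `k` of rank at least `r`, this gives `N(m, n + m + 1) + N(m + 3, n) = p(n)`, and
multiplying by `q ^ (n + m + 1)` and summing over `n` reduces the identity to Euler's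
`∑ p(n) qⁿ = 1 / (q;q)_∞`. That one is proved by expanding `∏_{j ≤ N} (1 - q ^ j)⁻¹` into
geometric series, whose coefficients count the partitions with parts at most `N`, and letting
`N → ∞` by dominated convergence.
-/

open Multiset

namespace Dyson

/-- The rank of a partition: largest part minus number of parts. -/
def rank {n : ℕ} (π : n.Partition) : ℤ :=
  (π.parts.sup : ℤ) - π.parts.card

/-- The Euler product `(q;q)_∞`. -/
noncomputable def euler (q : ℝ) : ℝ := ∏' j : ℕ, (1 - q ^ (j + 1))

/-- `Q_m(q)`: generating function for nonempty partitions of rank ≥ m. -/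
noncomputable def Q (q : ℝ) (m : ℤ) : ℝ :=
  ∑' n : ℕ, (Nat.card {π : (n + 1).Partition // m ≤ rank π} : ℝ) * q ^ (n + 1)

noncomputable def qPoch (q : ℝ) (n : ℕ) : ℝ := ∏ j ∈ Finset.range n, (1 - q ^ (j + 1))

noncomputable def qbinom (q : ℝ) (a b : ℤ) : ℝ :=
  if 0 ≤ b ∧ b ≤ a then qPoch q a.toNat / (qPoch q b.toNat * qPoch q (a - b).toNat) else 0

noncomputable def QL (q : ℝ) (m L : ℤ) : ℝ :=
  ∑' n : ℕ,
    (Nat.card {π : (n + 1).Partition // m ≤ rank π ∧ (π.parts.sup : ℤ) ≤ L} : ℝ) * q ^ (n + 1)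

def partAt {n : ℕ} (π : n.Partition) (j : ℕ) : ℕ :=
  ((π.parts.sort (· ≤ ·)).reverse.getD j 0)

def inRankSet {n : ℕ} (π : n.Partition) (k : ℤ) : Prop :=
  ∃ j : ℕ, (j : ℤ) - partAt π (j + 1) = k

noncomputable def G (q : ℝ) (k : ℤ) : ℝ :=
  ∑' n : ℕ, (Nat.card {π : n.Partition // inRankSet π k} : ℝ) * q ^ n

def crank {n : ℕ} (π : n.Partition) : ℤ :=
  if π.parts.count 1 = 0 then (π.parts.sup : ℤ)
  else ((π.parts.filter (fun p => π.parts.count 1 < p)).card : ℤ) - π.parts.count 1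

section Columns

-- On Ferrers diagrams, `removeColumn` deletes the first column and `addColumn t k` prepends a
-- column of length `card t + k`.
def removeColumn (s : Multiset ℕ) : Multiset ℕ := (s.map (· - 1)).filter (· ≠ 0)

def addColumn (t : Multiset ℕ) (k : ℕ) : Multiset ℕ := t.map (· + 1) + replicate k 1

variable {s t : Multiset ℕ} {k x : ℕ}

@[simp] lemma mem_removeColumn : x ∈ removeColumn s ↔ x + 1 ∈ s ∧ x ≠ 0 := by
  simp only [removeColumn, mem_filter, mem_map]
  constructor
  · rintro ⟨⟨y, hy, rfl⟩, hy0⟩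
    exact ⟨by rwa [Nat.sub_add_cancel (by omega)], hy0⟩
  · rintro ⟨hx, hx0⟩
    exact ⟨⟨x + 1, hx, rfl⟩, hx0⟩

lemma mem_addColumn : x ∈ addColumn t k → x = 1 ∨ ∃ y ∈ t, x = y + 1 := by
  simp only [addColumn, mem_add, mem_map, mem_replicate]
  rintro (⟨y, hy, rfl⟩ | ⟨-, rfl⟩)
  exacts [Or.inr ⟨y, hy, rfl⟩, Or.inl rfl]

lemma card_addColumn : card (addColumn t k) = card t + k := by
  simp [addColumn]

lemma sum_addColumn : (addColumn t k).sum = t.sum + card t + k := by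
  simp [addColumn, sum_map_add]

lemma card_removeColumn_le : card (removeColumn s) ≤ card s :=
  (card_le_card (filter_le _ _)).trans (card_map _ _).le

lemma sum_removeColumn_add_card (hs : 0 ∉ s) : (removeColumn s).sum + card s = s.sum := by
  induction s using Multiset.induction_on with
  | empty => simp [removeColumn]
  | cons a s ih =>
    simp only [mem_cons, not_or] at hs
    have := ih hs.2
    by_cases ha : a - 1 = 0 <;> simp_all [removeColumn] <;> omega

lemma removeColumn_addColumn (ht : 0 ∉ t) : removeColumn (addColumn t k) = t := by
  simp only [removeColumn, addColumn, map_add, map_map, map_replicate, filter_add,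
    Function.comp_def, add_tsub_cancel_right, map_id']
  rw [(filter_eq_nil (s := replicate k _)).mpr fun a ha => by simpa using eq_of_mem_replicate ha,
    add_zero, filter_eq_self.mpr]
  rintro a ha rfl
  exact ht ha

lemma addColumn_removeColumn (hs : 0 ∉ s) :
    addColumn (removeColumn s) (card s - card (removeColumn s)) = s := by
  have hmap : (removeColumn s).map (· + 1) = s.filter (1 < ·) := by
    rw [removeColumn, filter_map, map_map,
      filter_congr (q := (1 < ·)) fun x _ => by simp only [Function.comp_apply]; omega]
    refine (map_congr rfl fun x hx => ?_).trans (map_id _)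
    have := (mem_filter.mp hx).2
    simp only [Function.comp_apply, id]
    omega
  have hones : s.filter (¬ 1 < ·) = replicate (card (s.filter (¬ 1 < ·))) 1 := by
    refine eq_replicate_card.mpr fun b hb => ?_
    obtain ⟨hb, hb1⟩ := mem_filter.mp hb
    have : b ≠ 0 := fun h => hs (h ▸ hb)
    omega
  have hcard := congrArg card (filter_add_not (1 < ·) s)
  rw [card_add, ← hmap, card_map] at hcard
  conv_rhs => rw [← filter_add_not (1 < ·) s, ← hmap, hones]
  rw [addColumn]
  congr 2
  omega

end Columns

section Partition

variable {n : ℕ}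

lemma zero_notMem_parts (π : n.Partition) : 0 ∉ π.parts :=
  fun h => (π.parts_pos h).false

lemma sup_mem_parts (π : n.Partition) (hn : n ≠ 0) : π.parts.sup ∈ π.parts := by
  have hne : π.parts ≠ 0 := fun h => hn (by rw [← π.parts_sum, h, sum_zero])
  obtain ⟨y, hy, hmax⟩ := exists_max_image id hne
  rwa [le_antisymm (Multiset.sup_le.mpr hmax) (le_sup hy)]

lemma sup_parts_le (π : n.Partition) : π.parts.sup ≤ n :=
  Multiset.sup_le.mpr fun _ => Nat.Partition.le_of_mem_parts

lemma card_parts_pos (π : n.Partition) (hn : n ≠ 0) : 0 < card π.parts :=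
  card_pos_iff_exists_mem.mpr ⟨_, sup_mem_parts π hn⟩

lemma rank_lt {r : ℤ} (π : n.Partition) (hr : 0 < r) (hn : n ≤ r) : rank π < r := by
  have hsup := sup_parts_le π
  rcases eq_or_ne n 0 with rfl | hn0
  · unfold rank; omega
  · have := card_parts_pos π hn0
    unfold rank; omega

end Partition

section DysonMap

variable (m : ℕ) {n : ℕ}

def dysonMap (μ : n.Partition) : (n + m + 1).Partition where
  parts := (card μ.parts + m + 1) ::ₘ removeColumn μ.parts
  parts_pos := by
    simp only [mem_cons, mem_removeColumn]
    rintro i (rfl | ⟨-, hi⟩) <;> omega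
  parts_sum := by
    have := sum_removeColumn_add_card (zero_notMem_parts μ)
    rw [sum_cons, μ.parts_sum] at *
    omega

def dysonMapInv (π : (n + m + 1).Partition) (h : (m : ℤ) ≤ rank π) : n.Partition where
  parts := addColumn (π.parts.erase π.parts.sup) (π.parts.sup - m - card π.parts)
  parts_pos := by
    intro i hi
    rcases mem_addColumn hi with rfl | ⟨y, -, rfl⟩ <;> omega
  parts_sum := by
    have hπ := cons_erase (sup_mem_parts π (by omega))
    have hsum := congrArg sum hπ
    have hcard := congrArg card hπ
    rw [sum_cons, π.parts_sum] at hsum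
    rw [card_cons] at hcard
    unfold rank at h
    rw [sum_addColumn]
    omega

variable {m}

lemma sup_dysonMap {μ : n.Partition} (h : rank μ ≤ m + 2) :
    (dysonMap m μ).parts.sup = card μ.parts + m + 1 := by
  refine (sup_cons _ _).trans (sup_eq_left.mpr (Multiset.sup_le.mpr fun x hx => ?_))
  have := le_sup (mem_removeColumn.mp hx).1
  unfold rank at h
  omega

lemma rank_dysonMap {μ : n.Partition} (h : rank μ ≤ m + 2) : (m : ℤ) ≤ rank (dysonMap m μ) := by
  have := card_removeColumn_le (s := μ.parts)
  unfold rank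
  rw [sup_dysonMap h]
  simp only [dysonMap, card_cons]
  omega

lemma card_dysonMapInv {π : (n + m + 1).Partition} (h : (m : ℤ) ≤ rank π) :
    card (dysonMapInv m π h).parts = π.parts.sup - m - 1 := by
  have hmem := sup_mem_parts π (by omega)
  have := card_parts_pos π (by omega)
  unfold rank at h
  simp only [dysonMapInv, card_addColumn, card_erase_of_mem hmem, Nat.pred_eq_sub_one]
  omega

lemma rank_dysonMapInv {π : (n + m + 1).Partition} (h : (m : ℤ) ≤ rank π) :
    rank (dysonMapInv m π h) ≤ m + 2 := by
  have hsup : (dysonMapInv m π h).parts.sup ≤ π.parts.sup + 1 := by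
    refine Multiset.sup_le.mpr fun x hx => ?_
    rcases mem_addColumn hx with rfl | ⟨y, hy, rfl⟩
    · omega
    · have := le_sup (mem_of_mem_erase hy)
      omega
  have := card_dysonMapInv h
  have := card_parts_pos π (by omega)
  unfold rank at h ⊢
  omega

lemma dysonMapInv_dysonMap {μ : n.Partition} (h : rank μ ≤ m + 2) :
    dysonMapInv m (dysonMap m μ) (rank_dysonMap h) = μ := by
  ext1
  have := card_removeColumn_le (s := μ.parts)
  simp only [dysonMapInv, sup_dysonMap h]
  simp only [dysonMap, erase_cons_head, card_cons]
  convert addColumn_removeColumn (zero_notMem_parts μ) using 2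
  omega

lemma dysonMap_dysonMapInv {π : (n + m + 1).Partition} (h : (m : ℤ) ≤ rank π) :
    dysonMap m (dysonMapInv m π h) = π := by
  ext1
  have hmem := sup_mem_parts π (by omega)
  have hsup := card_dysonMapInv h
  have := card_parts_pos π (by omega)
  unfold rank at h
  simp only [dysonMap, hsup]
  simp only [dysonMapInv,
    removeColumn_addColumn fun h0 => zero_notMem_parts π (mem_of_mem_erase h0)]
  rw [show π.parts.sup - m - 1 + m + 1 = π.parts.sup by omega, cons_erase hmem]

def dysonEquiv (m n : ℕ) :
    {μ : n.Partition // rank μ ≤ m + 2} ≃ {π : (n + m + 1).Partition // (m : ℤ) ≤ rank π} where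
  toFun μ := ⟨dysonMap m μ, rank_dysonMap μ.2⟩
  invFun π := ⟨dysonMapInv m π π.2, rank_dysonMapInv π.2⟩
  left_inv μ := Subtype.ext (dysonMapInv_dysonMap μ.2)
  right_inv π := Subtype.ext (dysonMap_dysonMapInv π.2)

end DysonMap

section Multiplicities

variable {N : ℕ}

-- `f j` is the multiplicity of the part `j + 1`.
def weight (f : Fin N → ℕ) : ℕ := ∑ j : Fin N, ((j : ℕ) + 1) * f j

lemma weight_snoc (g : Fin N → ℕ) (a : ℕ) :
    weight (Fin.snoc g a : Fin (N + 1) → ℕ) = weight g + (N + 1) * a := by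
  simp [weight, Fin.sum_univ_castSucc]

lemma hasSum_pow_weight {q : ℝ} (hq : |q| < 1) :
    HasSum (fun f : Fin N → ℕ => q ^ weight f) (∏ j ∈ Finset.range N, (1 - q ^ (j + 1)))⁻¹ := by
  induction N generalizing q with
  | zero => simp [weight]
  | succ N ih =>
    have hqN : |q ^ (N + 1)| < 1 := by
      rw [abs_pow]; exact pow_lt_one₀ (abs_nonneg q) hq (by omega)
    have hnorm : Summable fun p : ℕ × (Fin N → ℕ) => ‖(q ^ (N + 1)) ^ p.1 * q ^ weight p.2‖ := by
      have hgeom : Summable fun k : ℕ => |q ^ (N + 1)| ^ k :=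
        summable_geometric_of_lt_one (abs_nonneg _) hqN
      have hweight : Summable fun f : Fin N → ℕ => |q| ^ weight f :=
        (ih (q := |q|) (by rwa [abs_abs])).summable
      simpa only [norm_mul, norm_pow, Real.norm_eq_abs, ← abs_pow] using
        hgeom.mul_of_nonneg hweight (fun _ => by positivity) (fun _ => by positivity)
    have hsnoc : (fun f => q ^ weight f) ∘ Fin.snocEquiv (fun _ => ℕ) =
        fun p : ℕ × (Fin N → ℕ) => (q ^ (N + 1)) ^ p.1 * q ^ weight p.2 := by
      funext p
      change q ^ weight (Fin.snoc p.2 p.1 : Fin (N + 1) → ℕ) = _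
      rw [weight_snoc, pow_add, pow_mul, mul_comm]
    rw [← (Fin.snocEquiv fun _ => ℕ).hasSum_iff, hsnoc, Finset.prod_range_succ, mul_inv, mul_comm]
    have hprod := (hasSum_geometric_of_abs_lt_one hqN).mul (ih hq) hnorm.of_norm
    exact hprod

def ofMultiplicities (f : Fin N → ℕ) : Multiset ℕ := ∑ j : Fin N, replicate (f j) ((j : ℕ) + 1)

lemma count_ofMultiplicities (f : Fin N → ℕ) (j : Fin N) :
    count ((j : ℕ) + 1) (ofMultiplicities f) = f j := by
  rw [ofMultiplicities, count_sum', Finset.sum_eq_single j]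
  · simp
  · intro i _ hij
    rw [count_replicate, if_neg fun h => hij (Fin.ext (by omega))]
  · simp

lemma mem_ofMultiplicities {f : Fin N → ℕ} {x : ℕ} (hx : x ∈ ofMultiplicities f) :
    0 < x ∧ x ≤ N := by
  obtain ⟨j, -, hj⟩ := mem_sum.mp hx
  rw [eq_of_mem_replicate hj]
  omega

lemma sum_ofMultiplicities (f : Fin N → ℕ) : (ofMultiplicities f).sum = weight f := by
  simp [ofMultiplicities, weight, sum_sum, mul_comm]

lemma ofMultiplicities_count {s : Multiset ℕ} (hs : ∀ x ∈ s, 0 < x ∧ x ≤ N) :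
    ofMultiplicities (fun j : Fin N => count ((j : ℕ) + 1) s) = s := by
  ext k
  by_cases hk : 0 < k ∧ k ≤ N
  · obtain ⟨j, rfl⟩ : ∃ j : Fin N, (j : ℕ) + 1 = k := ⟨⟨k - 1, by omega⟩, by simp; omega⟩
    exact count_ofMultiplicities _ j
  · rw [count_eq_zero.mpr fun h => hk (mem_ofMultiplicities h),
      count_eq_zero.mpr fun h => hk (hs k h)]

lemma parts_pos_le_of_mem_restricted {n : ℕ} {π : n.Partition}
    (hπ : π ∈ Nat.Partition.restricted n (· ≤ N)) : ∀ x ∈ π.parts, 0 < x ∧ x ≤ N :=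
  fun _ hx => ⟨π.parts_pos hx, (Finset.mem_filter.mp hπ).2 _ hx⟩

def multiplicitiesEquiv (N n : ℕ) :
    ↥(weight ⁻¹' {n} : Set (Fin N → ℕ)) ≃ Nat.Partition.restricted n (· ≤ N) where
  toFun f := ⟨⟨ofMultiplicities f.1, fun hi => (mem_ofMultiplicities hi).1,
    (sum_ofMultiplicities f.1).trans f.2⟩,
    Finset.mem_filter.mpr ⟨Finset.mem_univ _, fun _ hi => (mem_ofMultiplicities hi).2⟩⟩
  invFun π := ⟨fun j => count ((j : ℕ) + 1) π.1.parts, by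
    rw [Set.mem_preimage, Set.mem_singleton_iff, ← sum_ofMultiplicities,
      ofMultiplicities_count (parts_pos_le_of_mem_restricted π.2), π.1.parts_sum]⟩
  left_inv f := Subtype.ext (funext (count_ofMultiplicities f.1))
  right_inv π := Subtype.ext (Nat.Partition.ext
    (ofMultiplicities_count (parts_pos_le_of_mem_restricted π.2)))

end Multiplicities

section EulerGeneratingFunction

open Filter Topology

lemma hasSum_card_restricted_le_mul_pow {q : ℝ} (hq : |q| < 1) (N : ℕ) :
    HasSum (fun n => ((Nat.Partition.restricted n (· ≤ N)).card : ℝ) * q ^ n)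
      (∏ j ∈ Finset.range N, (1 - q ^ (j + 1)))⁻¹ := by
  have hfiber (n : ℕ) : ∑' f : ↥(weight ⁻¹' {n} : Set (Fin N → ℕ)), q ^ weight f.1 =
      ((Nat.Partition.restricted n (· ≤ N)).card : ℝ) * q ^ n := by
    rw [tsum_congr fun f : ↥(weight ⁻¹' {n} : Set (Fin N → ℕ)) =>
        congrArg (q ^ ·) (f.2 : weight f.1 = n),
      tsum_const, nsmul_eq_mul, Nat.card_congr (multiplicitiesEquiv N n), Nat.card_eq_finsetCard]
  simpa only [hfiber] using (hasSum_pow_weight (N := N) hq).tsum_fiberwise weight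

lemma card_restricted_le_le (n N : ℕ) :
    (Nat.Partition.restricted n (· ≤ N)).card ≤ Nat.card n.Partition :=
  (Finset.card_filter_le _ _).trans_eq Nat.card_eq_fintype_card.symm

lemma card_restricted_le_of_le {n N : ℕ} (hn : n ≤ N) :
    (Nat.Partition.restricted n (· ≤ N)).card = Nat.card n.Partition := by
  rw [Nat.Partition.restricted, Finset.filter_true_of_mem fun _ _ _ hi =>
    (Nat.Partition.le_of_mem_parts hi).trans hn, Finset.card_univ, Nat.card_eq_fintype_card]

lemma prod_inv_one_sub_pow_le_exp {x : ℝ} (hx0 : 0 ≤ x) (hx1 : x < 1) (N : ℕ) :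
    (∏ j ∈ Finset.range N, (1 - x ^ (j + 1)))⁻¹ ≤ Real.exp (∑' j : ℕ, x ^ (j + 1) / (1 - x)) := by
  have hsum : Summable fun j : ℕ => x ^ (j + 1) / (1 - x) :=
    ((summable_nat_add_iff 1).mpr (summable_geometric_of_lt_one hx0 hx1)).div_const _
  have hpow (j : ℕ) : x ^ (j + 1) ≤ x := pow_le_of_le_one hx0 hx1.le (by omega)
  have hfactor (j : ℕ) : (1 - x ^ (j + 1))⁻¹ ≤ 1 + x ^ (j + 1) / (1 - x) := by
    have hxj := hpow j
    have hxj' : 0 ≤ x ^ (j + 1) := by positivity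
    rw [show (1 - x ^ (j + 1))⁻¹ = 1 + x ^ (j + 1) / (1 - x ^ (j + 1)) by
      field_simp [show 1 - x ^ (j + 1) ≠ 0 by linarith]; ring]
    gcongr
  calc (∏ j ∈ Finset.range N, (1 - x ^ (j + 1)))⁻¹
      = ∏ j ∈ Finset.range N, (1 - x ^ (j + 1))⁻¹ := (Finset.prod_inv_distrib _).symm
    _ ≤ ∏ j ∈ Finset.range N, (1 + x ^ (j + 1) / (1 - x)) :=
      Finset.prod_le_prod (fun j _ => inv_nonneg.mpr (by linarith [hpow j])) fun j _ => hfactor j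
    _ ≤ Real.exp (∑ j ∈ Finset.range N, x ^ (j + 1) / (1 - x)) :=
      Real.prod_one_add_le_exp_sum _ fun j => div_nonneg (by positivity) (by linarith)
    _ ≤ Real.exp (∑' j : ℕ, x ^ (j + 1) / (1 - x)) :=
      Real.exp_le_exp.mpr (hsum.sum_le_tsum _ fun j _ => div_nonneg (by positivity) (by linarith))

lemma summable_card_partition_mul_pow_of_nonneg {x : ℝ} (hx0 : 0 ≤ x) (hx1 : x < 1) :
    Summable fun n => (Nat.card n.Partition : ℝ) * x ^ n := by
  refine summable_of_sum_range_le (c := Real.exp (∑' j : ℕ, x ^ (j + 1) / (1 - x)))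
    (fun n => by positivity) fun M => ?_
  have hM := hasSum_card_restricted_le_mul_pow (q := x) (by rwa [abs_of_nonneg hx0]) M
  calc ∑ n ∈ Finset.range M, (Nat.card n.Partition : ℝ) * x ^ n
      = ∑ n ∈ Finset.range M, ((Nat.Partition.restricted n (· ≤ M)).card : ℝ) * x ^ n :=
        Finset.sum_congr rfl fun n hn => by
          rw [card_restricted_le_of_le (Finset.mem_range.mp hn).le]
    _ ≤ _ := hM.summable.sum_le_tsum _ fun _ _ => by positivity
    _ = _ := hM.tsum_eq
    _ ≤ _ := prod_inv_one_sub_pow_le_exp hx0 hx1 M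

lemma summable_mul_pow_of_le_card_partition {c : ℕ → ℕ} (hc : ∀ n, c n ≤ Nat.card n.Partition)
    {q : ℝ} (hq : |q| < 1) : Summable fun n => (c n : ℝ) * q ^ n :=
  (summable_card_partition_mul_pow_of_nonneg (abs_nonneg q) hq).of_norm_bounded fun n => by
    rw [norm_mul, norm_pow, Real.norm_natCast, Real.norm_eq_abs]
    gcongr
    exact hc n

theorem hasSum_card_partition_mul_pow {q : ℝ} (hq : |q| < 1) :
    HasSum (fun n => (Nat.card n.Partition : ℝ) * q ^ n) (euler q)⁻¹ := by
  set P := ∑' n, (Nat.card n.Partition : ℝ) * q ^ n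
  have hfactor (j : ℕ) : 1 - q ^ (j + 1) ≠ 0 := by
    have : |q ^ (j + 1)| < 1 := by rw [abs_pow]; exact pow_lt_one₀ (abs_nonneg q) hq (by omega)
    linarith [le_abs_self (q ^ (j + 1))]
  have hprod : Tendsto (fun N => ∏ j ∈ Finset.range N, (1 - q ^ (j + 1))) atTop (𝓝 (euler q)) := by
    have hmult : Multipliable fun j : ℕ => 1 - q ^ (j + 1) := by
      simpa only [sub_eq_add_neg] using Real.multipliable_one_add_of_summable
        ((summable_nat_add_iff 1).mpr (summable_geometric_of_abs_lt_one hq)).neg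
    exact hmult.hasProd.tendsto_prod_nat
  -- the `n`-th coefficient of the truncated product is `p(n)` as soon as `n ≤ N`
  have hinv : Tendsto (fun N => (∏ j ∈ Finset.range N, (1 - q ^ (j + 1)))⁻¹) atTop (𝓝 P) := by
    refine (tendsto_tsum_of_dominated_convergence
      (summable_card_partition_mul_pow_of_nonneg (abs_nonneg q) hq) (fun n => ?_)
      (Eventually.of_forall fun N n => ?_)).congr fun N =>
        (hasSum_card_restricted_le_mul_pow hq N).tsum_eq
    · exact tendsto_const_nhds.congr' ((eventually_ge_atTop n).mono fun N hN => by
        beta_reduce; rw [card_restricted_le_of_le hN])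
    · rw [norm_mul, norm_pow, Real.norm_natCast, Real.norm_eq_abs]
      gcongr
      exact card_restricted_le_le n N
  have hone : P * euler q = 1 :=
    tendsto_nhds_unique (hinv.mul hprod) (tendsto_const_nhds.congr fun N =>
      (inv_mul_cancel₀ (Finset.prod_ne_zero_iff.mpr fun j _ => hfactor j)).symm)
  rw [inv_eq_of_mul_eq_one_left hone]
  exact (summable_mul_pow_of_le_card_partition (fun _ => le_rfl) hq).hasSum

end EulerGeneratingFunction

section RankCount

noncomputable def cardRankGe (r : ℤ) (k : ℕ) : ℕ := Nat.card {π : k.Partition // r ≤ rank π}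

lemma Q_eq_tsum_cardRankGe (q : ℝ) (r : ℤ) :
    Q q r = ∑' n, (cardRankGe r (n + 1) : ℝ) * q ^ (n + 1) :=
  rfl

lemma cardRankGe_le (r : ℤ) (k : ℕ) : cardRankGe r k ≤ Nat.card k.Partition :=
  Finite.card_subtype_le _

lemma cardRankGe_eq_zero {r : ℤ} {k : ℕ} (hr : 0 < r) (hk : k ≤ r) : cardRankGe r k = 0 :=
  Nat.card_eq_zero.mpr (Or.inl ⟨fun π => (rank_lt π.1 hr hk).not_ge π.2⟩)

theorem cardRankGe_add_cardRankGe (m n : ℕ) :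
    cardRankGe m (n + m + 1) + cardRankGe (m + 3) n = Nat.card n.Partition := by
  rw [cardRankGe, cardRankGe, ← Nat.card_congr (dysonEquiv m n),
    Nat.card_congr (Equiv.subtypeEquivRight fun μ => by omega :
      {μ : n.Partition // rank μ ≤ m + 2} ≃ {μ // ¬ ((m : ℤ) + 3 ≤ rank μ)}),
    add_comm, ← Nat.card_sum]
  exact Nat.card_congr (Equiv.sumCompl _)

lemma Q_eq_tsum {q : ℝ} (hq : |q| < 1) {r : ℤ} (hr : 0 < r) :
    Q q r = ∑' n, (cardRankGe r n : ℝ) * q ^ n := by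
  rw [(summable_mul_pow_of_le_card_partition (cardRankGe_le r) hq).tsum_eq_zero_add,
    cardRankGe_eq_zero hr (by simpa using hr.le), Nat.cast_zero, zero_mul, zero_add]
  rfl

lemma Q_natCast_eq {q : ℝ} (hq : |q| < 1) (m : ℕ) :
    Q q m = q ^ (m + 1) * ∑' n, (cardRankGe m (n + m + 1) : ℝ) * q ^ n := by
  have hsum : Summable fun n => (cardRankGe m (n + 1) : ℝ) * q ^ (n + 1) :=
    (summable_nat_add_iff 1).mpr (summable_mul_pow_of_le_card_partition (cardRankGe_le m) hq)
  rw [Q_eq_tsum_cardRankGe, ← hsum.sum_add_tsum_nat_add m, ← tsum_mul_left,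
    Finset.sum_eq_zero fun i hi => by
      have := Finset.mem_range.mp hi
      rw [cardRankGe_eq_zero (by omega) (by omega), Nat.cast_zero, zero_mul],
    zero_add]
  refine tsum_congr fun n => ?_
  rw [show n + m + 1 = n + (m + 1) by omega, pow_add]
  ring

end RankCount

/-- for m ≥ 0, `Q_m(q) + q^{m+1} Q_{m+3}(q) = q^{m+1}/(q;q)_∞`. -/
theorem stmt2 (q : ℝ) (hq : |q| < 1) (m : ℕ) :
    Q q m + q ^ (m + 1) * Q q (m + 3) = q ^ (m + 1) * (euler q)⁻¹ := by
  have hcount := cardRankGe_add_cardRankGe m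
  have ha := summable_mul_pow_of_le_card_partition (c := fun n => cardRankGe m (n + m + 1))
    (fun n => Nat.le.intro (hcount n)) hq
  have hb := summable_mul_pow_of_le_card_partition (cardRankGe_le (m + 3)) hq
  rw [Q_natCast_eq hq, Q_eq_tsum hq (by positivity), ← mul_add, ← ha.tsum_add hb,
    ← (hasSum_card_partition_mul_pow hq).tsum_eq]
  congr 1
  exact tsum_congr fun n => by rw [← hcount n]; push_cast; ring

end Dyson
end

section
/- For m ≥ 0, Q_m^L(q) + q^{m+1} Q_{m+3}^{L+2}(q) = q^{m+1} · qbinom(2L−m+1, L+2). -/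
namespace Dyson

/-! ### Auxiliary development -/

section Aux

variable {q : ℝ}

lemma qPoch_zero (q : ℝ) : qPoch q 0 = 1 := Finset.prod_range_zero _

lemma qPoch_succ (q : ℝ) (n : ℕ) : qPoch q (n + 1) = qPoch q n * (1 - q ^ (n + 1)) :=
  Finset.prod_range_succ _ n

lemma qPoch_pos (hq : |q| < 1) (n : ℕ) : 0 < qPoch q n := by
  apply Finset.prod_pos
  intro j _
  have h1 : |q| ^ (j + 1) < 1 := pow_lt_one₀ (abs_nonneg q) hq (Nat.succ_ne_zero j)
  have h2 : q ^ (j + 1) ≤ |q| ^ (j + 1) := by rw [← abs_pow]; exact le_abs_self _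
  linarith

lemma qPoch_ne (hq : |q| < 1) (n : ℕ) : qPoch q n ≠ 0 := ne_of_gt (qPoch_pos hq n)

/-- Gaussian binomial with natural arguments. -/
noncomputable def nC (q : ℝ) (n k : ℕ) : ℝ :=
  if k ≤ n then qPoch q n / (qPoch q k * qPoch q (n - k)) else 0

lemma nC_self (hq : |q| < 1) (n : ℕ) : nC q n n = 1 := by
  rw [nC, if_pos le_rfl, Nat.sub_self, qPoch_zero, mul_one, div_self (qPoch_ne hq n)]

lemma nC_zero (hq : |q| < 1) (n : ℕ) : nC q n 0 = 1 := by
  rw [nC, if_pos (Nat.zero_le n), Nat.sub_zero, qPoch_zero, one_mul,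
    div_self (qPoch_ne hq n)]

lemma nC_of_gt {n k : ℕ} (h : n < k) : nC q n k = 0 := by
  rw [nC, if_neg]; omega

lemma nC_pascal (hq : |q| < 1) (n k : ℕ) (h : k ≤ n) :
    nC q (n + 1) (k + 1) = nC q n k + q ^ (k + 1) * nC q n (k + 1) := by
  rcases eq_or_lt_of_le h with rfl | hlt
  · rw [nC_self hq, nC_self hq, nC_of_gt (Nat.lt_succ_self k), mul_zero, add_zero]
  · obtain ⟨d, rfl⟩ : ∃ d, n = k + d + 1 := ⟨n - k - 1, by omega⟩
    rw [nC, nC, nC, if_pos (by omega), if_pos (by omega), if_pos (by omega)]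
    have e1 : k + d + 1 + 1 - (k + 1) = d + 1 := by omega
    have e2 : k + d + 1 - k = d + 1 := by omega
    have e3 : k + d + 1 - (k + 1) = d := by omega
    rw [e1, e2, e3]
    have hp1 : qPoch q (k + d + 1 + 1) = qPoch q (k + d + 1) * (1 - q ^ (k + d + 2)) := by
      rw [qPoch_succ]
    have hp2 : qPoch q (k + 1) = qPoch q k * (1 - q ^ (k + 1)) := qPoch_succ q k
    have hp3 : qPoch q (d + 1) = qPoch q d * (1 - q ^ (d + 1)) := qPoch_succ q d
    have hq1 : q ^ (k + d + 2) = q ^ (k + 1) * q ^ (d + 1) := by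
      rw [← pow_add]; congr 1; omega
    rw [hp1, hp2, hp3, hq1]
    have n1 := qPoch_ne hq k
    have n2 := qPoch_ne hq d
    have n3 := qPoch_ne hq (k + d + 1)
    have n4 : (1 : ℝ) - q ^ (k + 1) ≠ 0 := by
      have := qPoch_pos hq (k + 1); rw [hp2] at this
      intro h0; rw [h0, mul_zero] at this; exact lt_irrefl 0 this
    have n5 : (1 : ℝ) - q ^ (d + 1) ≠ 0 := by
      have := qPoch_pos hq (d + 1); rw [hp3] at this
      intro h0; rw [h0, mul_zero] at this; exact lt_irrefl 0 this
    field_simp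
    ring

lemma nC_ratio (hq : |q| < 1) (c d : ℕ) :
    (1 - q ^ (c + 1)) * nC q (c + d + 1) (c + 1) = (1 - q ^ (d + 1)) * nC q (c + d + 1) c := by
  rw [nC, nC, if_pos (by omega), if_pos (by omega)]
  have e1 : c + d + 1 - (c + 1) = d := by omega
  have e2 : c + d + 1 - c = d + 1 := by omega
  rw [e1, e2, qPoch_succ q c, qPoch_succ q d]
  have n1 := qPoch_ne hq c
  have n2 := qPoch_ne hq d
  have n4 : (1 : ℝ) - q ^ (c + 1) ≠ 0 := by
    have h1 := qPoch_pos hq (c + 1); rw [qPoch_succ] at h1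
    intro h0; rw [h0, mul_zero] at h1; exact lt_irrefl 0 h1
  have n5 : (1 : ℝ) - q ^ (d + 1) ≠ 0 := by
    have h1 := qPoch_pos hq (d + 1); rw [qPoch_succ] at h1
    intro h0; rw [h0, mul_zero] at h1; exact lt_irrefl 0 h1
  field_simp

/-! ### Counting partitions -/

/-- number of partitions of `n` with at most `a` parts, all parts at most `b`. -/
noncomputable def cB (a b n : ℕ) : ℕ :=
  Nat.card {π : n.Partition // π.parts.card ≤ a ∧ π.parts.sup ≤ b}

/-- number of partitions of `n` with rank at least `m` and largest part at most `L`. -/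
noncomputable def cQ (m L n : ℕ) : ℕ :=
  Nat.card {π : n.Partition // π.parts.card + m ≤ π.parts.sup ∧ π.parts.sup ≤ L}

noncomputable def cBmem (a b n : ℕ) : ℕ :=
  Nat.card {π : n.Partition // (π.parts.card ≤ a ∧ π.parts.sup ≤ b) ∧ b ∈ π.parts}

noncomputable def cQmem (m L n : ℕ) : ℕ :=
  Nat.card {π : n.Partition // (π.parts.card + m ≤ π.parts.sup ∧ π.parts.sup ≤ L) ∧ L ∈ π.parts}

lemma parts_card_pos {n : ℕ} (π : (n + 1).Partition) : 0 < π.parts.card := by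
  refine Multiset.card_pos.mpr fun h0 => ?_
  have := π.parts_sum
  rw [h0] at this
  simp at this

lemma card_split {n : ℕ} (p r : n.Partition → Prop) :
    Nat.card {π : n.Partition // p π} =
      Nat.card {π : n.Partition // p π ∧ ¬ r π} + Nat.card {π : n.Partition // p π ∧ r π} := by
  classical
  simp only [Nat.card_eq_fintype_card, Fintype.card_subtype]
  rw [← Finset.card_filter_add_card_filter_not
    (s := Finset.univ.filter fun π => p π) (p := fun π => r π), Finset.filter_filter,
    Finset.filter_filter]
  omega

lemma card_remove (t n : ℕ) (ht : 0 < t) (p : Multiset ℕ → Prop) :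
    Nat.card {π : (t + n).Partition // t ∈ π.parts ∧ p (π.parts.erase t)} =
      Nat.card {π : n.Partition // p π.parts} := by
  apply Nat.card_congr
  refine
    { toFun := fun x =>
        ⟨⟨x.1.parts.erase t, fun hi => x.1.parts_pos (Multiset.mem_of_mem_erase hi), ?_⟩, x.2.2⟩
      invFun := fun y =>
        ⟨⟨t ::ₘ y.1.parts, ?_, by rw [Multiset.sum_cons, y.1.parts_sum]⟩,
          Multiset.mem_cons_self t _, by rw [Multiset.erase_cons_head]; exact y.2⟩
      left_inv := fun x => ?_
      right_inv := fun y => ?_ }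
  · have h := Multiset.sum_erase x.2.1
    have h2 := x.1.parts_sum
    omega
  · intro i hi
    rcases Multiset.mem_cons.mp hi with h | h
    · omega
    · exact y.1.parts_pos h
  · apply Subtype.ext
    apply Nat.Partition.ext
    exact Multiset.cons_erase x.2.1
  · apply Subtype.ext
    apply Nat.Partition.ext
    exact Multiset.erase_cons_head t _

lemma cB_zero (a b : ℕ) : cB a b 0 = 1 := by
  rw [cB, Nat.card_eq_one_iff_unique]
  constructor
  · constructor
    intro x y
    apply Subtype.ext
    apply Subsingleton.elim
  · exact ⟨⟨default, by simp⟩⟩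

lemma cB_vanish {a b n : ℕ} (h : a * b < n) : cB a b n = 0 := by
  rw [cB]
  have : IsEmpty {π : n.Partition // π.parts.card ≤ a ∧ π.parts.sup ≤ b} := by
    refine ⟨fun x => ?_⟩
    obtain ⟨π, hc, hs⟩ := x
    have h1 : π.parts.sum ≤ π.parts.card * π.parts.sup := by
      have := Multiset.sum_le_card_nsmul π.parts π.parts.sup fun x hx => Multiset.le_sup hx
      simpa using this
    have h2 := π.parts_sum
    have h3 : π.parts.card * π.parts.sup ≤ a * b := Nat.mul_le_mul hc hs
    omega
  exact Nat.card_of_isEmpty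

lemma cQ_vanish {m L n : ℕ} (h : L * L < n) : cQ m L n = 0 := by
  rw [cQ]
  have : IsEmpty {π : n.Partition // π.parts.card + m ≤ π.parts.sup ∧ π.parts.sup ≤ L} := by
    refine ⟨fun x => ?_⟩
    obtain ⟨π, hc, hs⟩ := x
    have h1 : π.parts.sum ≤ π.parts.card * π.parts.sup := by
      have := Multiset.sum_le_card_nsmul π.parts π.parts.sup fun x hx => Multiset.le_sup hx
      simpa using this
    have h2 := π.parts_sum
    have h3 : π.parts.card * π.parts.sup ≤ L * L := Nat.mul_le_mul (by omega) hs
    omega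
  exact Nat.card_of_isEmpty

lemma cQ_vanish' {m L : ℕ} (h : L ≤ m) (n : ℕ) : cQ m L (n + 1) = 0 := by
  rw [cQ]
  have : IsEmpty {π : (n + 1).Partition //
      π.parts.card + m ≤ π.parts.sup ∧ π.parts.sup ≤ L} := by
    refine ⟨fun x => ?_⟩
    obtain ⟨π, hc, hs⟩ := x
    have := parts_card_pos π
    omega
  exact Nat.card_of_isEmpty

lemma cB_split (a b n : ℕ) : cB a (b + 1) n = cB a b n + cBmem a (b + 1) n := by
  rw [cB, card_split (r := fun π => (b + 1) ∈ π.parts)]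
  congr 1
  rw [cB]
  apply Nat.card_congr (Equiv.subtypeEquivRight _)
  intro π
  constructor
  · rintro ⟨⟨hc, hs⟩, hm⟩
    refine ⟨hc, Multiset.sup_le.mpr fun x hx => ?_⟩
    have h1 : x ≤ b + 1 := le_trans (Multiset.le_sup hx) hs
    have h2 : x ≠ b + 1 := fun h => hm (h ▸ hx)
    omega
  · rintro ⟨hc, hs⟩
    refine ⟨⟨hc, le_trans hs (by omega)⟩, fun hm => ?_⟩
    have := le_trans (Multiset.le_sup hm) hs
    omega

lemma cQ_split (m L n : ℕ) : cQ m (L + 1) n = cQ m L n + cQmem m (L + 1) n := by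
  rw [cQ, card_split (r := fun π => (L + 1) ∈ π.parts)]
  congr 1
  rw [cQ]
  apply Nat.card_congr (Equiv.subtypeEquivRight _)
  intro π
  constructor
  · rintro ⟨⟨hr, hs⟩, hm⟩
    refine ⟨?_, Multiset.sup_le.mpr fun x hx => ?_⟩
    · exact hr
    · have h1 : x ≤ L + 1 := le_trans (Multiset.le_sup hx) hs
      have h2 : x ≠ L + 1 := fun h => hm (h ▸ hx)
      omega
  · rintro ⟨hr, hs⟩
    refine ⟨⟨hr, le_trans hs (by omega)⟩, fun hm => ?_⟩
    have := le_trans (Multiset.le_sup hm) hs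
    omega

lemma cBmem_small {b n : ℕ} (a : ℕ) (h : n < b + 1) : cBmem a (b + 1) n = 0 := by
  rw [cBmem]
  have : IsEmpty {π : n.Partition //
      (π.parts.card ≤ a ∧ π.parts.sup ≤ b + 1) ∧ (b + 1) ∈ π.parts} := by
    refine ⟨fun x => ?_⟩
    obtain ⟨π, _, hm⟩ := x
    have h1 : b + 1 ≤ π.parts.sum :=
      Multiset.single_le_sum (fun x _ => Nat.zero_le x) _ hm
    have h2 := π.parts_sum
    omega
  exact Nat.card_of_isEmpty

lemma cQmem_small {L n : ℕ} (m : ℕ) (h : n < L + 1) : cQmem m (L + 1) n = 0 := by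
  rw [cQmem]
  have : IsEmpty {π : n.Partition //
      (π.parts.card + m ≤ π.parts.sup ∧ π.parts.sup ≤ L + 1) ∧ (L + 1) ∈ π.parts} := by
    refine ⟨fun x => ?_⟩
    obtain ⟨π, _, hm⟩ := x
    have h1 : L + 1 ≤ π.parts.sum :=
      Multiset.single_le_sum (fun x _ => Nat.zero_le x) _ hm
    have h2 := π.parts_sum
    omega
  exact Nat.card_of_isEmpty

lemma cBmem_shift (a b k : ℕ) : cBmem (a + 1) (b + 1) (b + 1 + k) = cB a (b + 1) k := by
  rw [cBmem, cB,
    ← card_remove (b + 1) k (Nat.succ_pos b) (fun M => M.card ≤ a ∧ M.sup ≤ b + 1)]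
  apply Nat.card_congr (Equiv.subtypeEquivRight _)
  intro π
  constructor
  · rintro ⟨⟨hc, hs⟩, hm⟩
    refine ⟨hm, ?_, ?_⟩
    · have h1 : (π.parts.erase (b + 1)).card = π.parts.card - 1 := by
        rw [Multiset.card_erase_of_mem hm, Nat.pred_eq_sub_one]
      have h2 : 0 < π.parts.card := Multiset.card_pos.mpr fun h0 => by
        rw [h0] at hm; exact (Multiset.notMem_zero _ hm)
      omega
    · exact le_trans
        (Multiset.sup_le.mpr fun x hx => Multiset.le_sup (Multiset.mem_of_mem_erase hx)) hs
  · rintro ⟨hm, hc, hs⟩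
    have hparts : π.parts = (b + 1) ::ₘ π.parts.erase (b + 1) := (Multiset.cons_erase hm).symm
    have hcc := congrArg Multiset.card hparts
    rw [Multiset.card_cons] at hcc
    have hss := congrArg Multiset.sup hparts
    rw [Multiset.sup_cons] at hss
    refine ⟨⟨?_, ?_⟩, hm⟩
    · omega
    · rw [hss]
      exact sup_le le_rfl hs

lemma cQmem_shift {m L : ℕ} (h : m ≤ L) (k : ℕ) :
    cQmem m (L + 1) (L + 1 + k) = cB (L - m) (L + 1) k := by
  rw [cQmem, cB,
    ← card_remove (L + 1) k (Nat.succ_pos L) (fun M => M.card ≤ L - m ∧ M.sup ≤ L + 1)]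
  apply Nat.card_congr (Equiv.subtypeEquivRight _)
  intro π
  constructor
  · rintro ⟨⟨hr, hs⟩, hm⟩
    have hsup : π.parts.sup = L + 1 := le_antisymm hs (Multiset.le_sup hm)
    have h1 : (π.parts.erase (L + 1)).card = π.parts.card - 1 := by
      rw [Multiset.card_erase_of_mem hm, Nat.pred_eq_sub_one]
    have h2 : 0 < π.parts.card := Multiset.card_pos.mpr fun h0 => by
      rw [h0] at hm; exact (Multiset.notMem_zero _ hm)
    refine ⟨hm, by omega, ?_⟩
    exact le_trans
      (Multiset.sup_le.mpr fun x hx => Multiset.le_sup (Multiset.mem_of_mem_erase hx)) hs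
  · rintro ⟨hm, hc, hs⟩
    have hparts : π.parts = (L + 1) ::ₘ π.parts.erase (L + 1) := (Multiset.cons_erase hm).symm
    have hcc := congrArg Multiset.card hparts
    rw [Multiset.card_cons] at hcc
    have hss := congrArg Multiset.sup hparts
    rw [Multiset.sup_cons] at hss
    have hsup : π.parts.sup = L + 1 := by
      rw [hss]
      exact le_antisymm (sup_le le_rfl hs) le_sup_left
    refine ⟨⟨?_, ?_⟩, hm⟩
    · rw [hsup]; omega
    · rw [hsup]

/-! ### Generating functions -/

noncomputable def Bgf (q : ℝ) (a b : ℕ) : ℝ := ∑' n : ℕ, (cB a b n : ℝ) * q ^ n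

noncomputable def Agf (q : ℝ) (m L : ℕ) : ℝ := ∑' n : ℕ, (cQ m L (n + 1) : ℝ) * q ^ (n + 1)

lemma Bgf_eq_sum (q : ℝ) (a b N : ℕ) (h : a * b < N) :
    Bgf q a b = ∑ n ∈ Finset.range N, (cB a b n : ℝ) * q ^ n := by
  refine tsum_eq_sum fun n hn => ?_
  rw [Finset.mem_range, not_lt] at hn
  rw [cB_vanish (by omega), Nat.cast_zero, zero_mul]

lemma Agf_eq_sum (q : ℝ) (m L N : ℕ) (h : L * L ≤ N) :
    Agf q m L = ∑ n ∈ Finset.range N, (cQ m L (n + 1) : ℝ) * q ^ (n + 1) := by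
  refine tsum_eq_sum fun n hn => ?_
  rw [Finset.mem_range, not_lt] at hn
  rw [cQ_vanish (by omega), Nat.cast_zero, zero_mul]

lemma Bgf_zero_left (q : ℝ) (b : ℕ) : Bgf q 0 b = 1 := by
  rw [Bgf_eq_sum q 0 b 1 (by omega), Finset.sum_range_one, cB_zero, Nat.cast_one, pow_zero,
    one_mul]

lemma Agf_vanish {m L : ℕ} (q : ℝ) (h : L ≤ m) : Agf q m L = 0 := by
  have : Agf q m L = ∑' _ : ℕ, (0 : ℝ) := by
    apply tsum_congr
    intro n
    rw [cQ_vanish' h, Nat.cast_zero, zero_mul]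
  rw [this, tsum_zero]

lemma Bgf_rec (q : ℝ) (a b : ℕ) :
    Bgf q (a + 1) (b + 1) = Bgf q (a + 1) b + q ^ (b + 1) * Bgf q a (b + 1) := by
  set K := a * (b + 1) + 1 with hK
  have e1 : (a + 1) * (b + 1) = a * (b + 1) + (b + 1) := by ring
  have h1 : (a + 1) * (b + 1) < b + 1 + K := by omega
  have h2 : (a + 1) * b < b + 1 + K := by
    have : (a + 1) * b ≤ (a + 1) * (b + 1) := Nat.mul_le_mul_left _ (by omega)
    omega
  rw [Bgf_eq_sum q (a + 1) (b + 1) (b + 1 + K) h1, Bgf_eq_sum q (a + 1) b (b + 1 + K) h2,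
    Bgf_eq_sum q a (b + 1) K (by omega), Finset.mul_sum]
  have hsplit : ∀ n : ℕ, (cB (a + 1) (b + 1) n : ℝ) * q ^ n =
      (cB (a + 1) b n : ℝ) * q ^ n + (cBmem (a + 1) (b + 1) n : ℝ) * q ^ n := by
    intro n
    rw [cB_split]
    push_cast
    ring
  rw [Finset.sum_congr rfl fun n _ => hsplit n, Finset.sum_add_distrib]
  congr 1
  rw [Finset.sum_range_add]
  have hz : ∑ n ∈ Finset.range (b + 1), (cBmem (a + 1) (b + 1) n : ℝ) * q ^ n = 0 := by
    refine Finset.sum_eq_zero fun n hn => ?_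
    rw [Finset.mem_range] at hn
    rw [cBmem_small _ hn, Nat.cast_zero, zero_mul]
  rw [hz, zero_add]
  refine Finset.sum_congr rfl fun k _ => ?_
  rw [cBmem_shift, pow_add]
  ring

lemma Agf_rec (q : ℝ) {m L : ℕ} (h : m ≤ L) :
    Agf q m (L + 1) = Agf q m L + q ^ (L + 1) * Bgf q (L - m) (L + 1) := by
  set x := L * L with hx
  set y := (L - m) * (L + 1) with hy
  set K := x + y + L + 9 with hKdef
  have hxx : (L + 1) * (L + 1) = x + 2 * L + 1 := by rw [hx]; ring
  have h1 : (L + 1) * (L + 1) ≤ L + K := by omega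
  rw [Agf_eq_sum q m (L + 1) (L + K) h1, Agf_eq_sum q m L (L + K) (by omega),
    Bgf_eq_sum q (L - m) (L + 1) K (by omega), Finset.mul_sum]
  have hsplit : ∀ n : ℕ, (cQ m (L + 1) (n + 1) : ℝ) * q ^ (n + 1) =
      (cQ m L (n + 1) : ℝ) * q ^ (n + 1) + (cQmem m (L + 1) (n + 1) : ℝ) * q ^ (n + 1) := by
    intro n
    rw [cQ_split]
    push_cast
    ring
  rw [Finset.sum_congr rfl fun n _ => hsplit n, Finset.sum_add_distrib]
  congr 1
  rw [Finset.sum_range_add]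
  have hz : ∑ n ∈ Finset.range L, (cQmem m (L + 1) (n + 1) : ℝ) * q ^ (n + 1) = 0 := by
    refine Finset.sum_eq_zero fun n hn => ?_
    rw [Finset.mem_range] at hn
    rw [cQmem_small _ (by omega), Nat.cast_zero, zero_mul]
  rw [hz, zero_add]
  refine Finset.sum_congr rfl fun k _ => ?_
  have e : L + k + 1 = L + 1 + k := by omega
  rw [e, cQmem_shift h, pow_add]
  ring

lemma Bgf_eq_nC (hq : |q| < 1) : ∀ a b : ℕ, Bgf q a b = nC q (a + b) b := by
  intro a
  induction a with
  | zero =>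
    intro b
    rw [Bgf_zero_left, Nat.zero_add, nC_self hq]
  | succ a ih =>
    intro b
    induction b with
    | zero =>
      rw [nC_zero hq]
      rw [Bgf_eq_sum q (a + 1) 0 1 (by omega), Finset.sum_range_one, cB_zero, Nat.cast_one,
        pow_zero, one_mul]
    | succ b ih2 =>
      rw [Bgf_rec, ih2, ih (b + 1)]
      have e1 : a + 1 + b = (a + b + 1) := by omega
      have e2 : a + (b + 1) = a + b + 1 := by omega
      have e3 : a + 1 + (b + 1) = (a + b + 1) + 1 := by omega
      rw [e1, e2, e3, nC_pascal hq (a + b + 1) b (by omega)]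

lemma main_nat (hq : |q| < 1) (m : ℕ) : ∀ ℓ : ℕ,
    Agf q m ℓ + q ^ (m + 1) * Agf q (m + 3) (ℓ + 2) =
      q ^ (m + 1) * (if m + 1 ≤ ℓ then nC q (2 * ℓ - m + 1) (ℓ + 2) else 0) := by
  intro ℓ
  induction ℓ with
  | zero =>
    rw [if_neg (by omega), Agf_vanish q (Nat.zero_le m), Agf_vanish q (by omega)]
    ring
  | succ ℓ ih =>
    by_cases h : m + 1 ≤ ℓ
    · obtain ⟨u, rfl⟩ : ∃ u, ℓ = m + 1 + u := ⟨ℓ - m - 1, by omega⟩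
      have hA := Agf_rec q (m := m) (L := m + 1 + u) (by omega)
      rw [(by omega : m + 1 + u - m = u + 1), Bgf_eq_nC hq] at hA
      have hB := Agf_rec q (m := m + 3) (L := m + 1 + u + 2) (by omega)
      rw [(by omega : m + 1 + u + 2 - (m + 3) = u), Bgf_eq_nC hq] at hB
      rw [if_pos (show m + 1 ≤ m + 1 + u from by omega)] at ih
      rw [if_pos (show m + 1 ≤ m + 1 + u + 1 from by omega)]
      rw [(by omega : m + 1 + u + 1 + 2 = m + 1 + u + 2 + 1)]
      rw [hA, hB]
      -- canonicalize nat index expressions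
      rw [(by omega : m + 1 + u + 1 = m + u + 2)] at *
      rw [(by omega : m + 1 + u + 2 = m + u + 3)] at *
      rw [(by omega : m + u + 3 + 1 = m + u + 4)] at *
      rw [(by omega : u + 1 + (m + u + 2) = m + 2 * u + 3)] at *
      rw [(by omega : u + (m + u + 4) = m + 2 * u + 4)] at *
      rw [(by omega : 2 * (m + 1 + u) - m + 1 = m + 2 * u + 3)] at ih
      rw [(by omega : 2 * (m + u + 2) - m + 1 = m + 2 * u + 5)]
      have hP1 : nC q (m + 2 * u + 5) (m + u + 4) =
          nC q (m + 2 * u + 4) (m + u + 3) + q ^ (m + u + 4) * nC q (m + 2 * u + 4) (m + u + 4) := by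
        rw [(by omega : m + 2 * u + 5 = m + 2 * u + 4 + 1), (by omega : m + u + 4 = m + u + 3 + 1)]
        exact nC_pascal hq _ _ (by omega)
      have hP2 : nC q (m + 2 * u + 4) (m + u + 3) =
          nC q (m + 2 * u + 3) (m + u + 2) + q ^ (m + u + 3) * nC q (m + 2 * u + 3) (m + u + 3) := by
        rw [(by omega : m + 2 * u + 4 = m + 2 * u + 3 + 1), (by omega : m + u + 3 = m + u + 2 + 1)]
        exact nC_pascal hq _ _ (by omega)
      have hratio : (1 - q ^ (m + u + 3)) * nC q (m + 2 * u + 3) (m + u + 3) =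
          (1 - q ^ (u + 1)) * nC q (m + 2 * u + 3) (m + u + 2) := by
        have h0 := nC_ratio hq (m + u + 2) u
        rw [(by omega : m + u + 2 + u + 1 = m + 2 * u + 3),
          (by omega : m + u + 2 + 1 = m + u + 3)] at h0
        exact h0
      linear_combination ih - q ^ (m + 1) * hP1 - q ^ (m + 1) * hP2 + q ^ (m + 1) * hratio
    · rcases Nat.lt_or_ge ℓ m with hlt | hge
      · rw [if_neg (by omega), Agf_vanish q (show ℓ + 1 ≤ m from by omega),
          Agf_vanish q (show ℓ + 1 + 2 ≤ m + 3 from by omega)]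
        ring
      · have hm : ℓ = m := by omega
        subst hm
        rw [if_pos (by omega)]
        have hA := Agf_rec q (m := ℓ) (L := ℓ) le_rfl
        rw [Nat.sub_self, Bgf_zero_left, Agf_vanish q le_rfl] at hA
        rw [hA, (by omega : ℓ + 1 + 2 = ℓ + 3), Agf_vanish q (le_refl (ℓ + 3)),
          (by omega : 2 * (ℓ + 1) - ℓ + 1 = ℓ + 3), nC_self hq]
        ring

lemma QL_vanish (q : ℝ) {m L : ℤ} (h : L ≤ m) : QL q m L = 0 := by
  have hz : ∀ n : ℕ,
      (Nat.card {π : (n + 1).Partition // m ≤ rank π ∧ (π.parts.sup : ℤ) ≤ L} : ℝ) = 0 := by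
    intro n
    have : IsEmpty {π : (n + 1).Partition // m ≤ rank π ∧ (π.parts.sup : ℤ) ≤ L} := by
      refine ⟨fun x => ?_⟩
      obtain ⟨π, h1, h2⟩ := x
      have hc := parts_card_pos π
      rw [rank] at h1
      omega
    rw [Nat.card_of_isEmpty, Nat.cast_zero]
  rw [QL]
  have : ∀ n : ℕ,
      (Nat.card {π : (n + 1).Partition // m ≤ rank π ∧ (π.parts.sup : ℤ) ≤ L} : ℝ) *
        q ^ (n + 1) = 0 := fun n => by rw [hz n, zero_mul]
  rw [tsum_congr this, tsum_zero]

lemma QL_eq_Agf (q : ℝ) (m ℓ : ℕ) : QL q (m : ℤ) (ℓ : ℤ) = Agf q m ℓ := by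
  rw [QL, Agf]
  apply tsum_congr
  intro n
  congr 1
  rw [Nat.cast_inj]
  apply Nat.card_congr (Equiv.subtypeEquivRight _)
  intro π
  rw [rank]
  constructor
  · rintro ⟨h1, h2⟩
    constructor <;> omega
  · rintro ⟨h1, h2⟩
    constructor <;> omega

end Aux

/-- for m ≥ 0,
`Q_m^L(q) + q^{m+1} Q_{m+3}^{L+2}(q) = q^{m+1} · qbinom(2L-m+1, L+2)`. -/
theorem stmt9 (q : ℝ) (hq : |q| < 1) (m : ℕ) (L : ℤ) :
    QL q m L + q ^ (m + 1) * QL q (m + 3) (L + 2) =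
      q ^ (m + 1) * qbinom q (2 * L - m + 1) (L + 2) := by
  rcases lt_or_ge L 0 with hL | hL
  · rw [QL_vanish q (show L ≤ (m : ℤ) from by omega),
      QL_vanish q (show L + 2 ≤ (m : ℤ) + 3 from by omega),
      qbinom, if_neg (by omega)]
    ring
  · obtain ⟨ℓ, rfl⟩ : ∃ ℓ : ℕ, L = (ℓ : ℤ) := ⟨L.toNat, (Int.toNat_of_nonneg hL).symm⟩
    rw [QL_eq_Agf q m ℓ]
    have h2 : QL q ((m : ℤ) + 3) ((ℓ : ℤ) + 2) = Agf q (m + 3) (ℓ + 2) := by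
      have h3 := QL_eq_Agf q (m + 3) (ℓ + 2)
      push_cast at h3
      exact h3
    rw [h2, main_nat hq m ℓ]
    congr 1
    by_cases hc : m + 1 ≤ ℓ
    · rw [if_pos hc, qbinom, if_pos (by constructor <;> omega), nC, if_pos (by omega)]
      rw [(by omega : (2 * (ℓ : ℤ) - m + 1).toNat = 2 * ℓ - m + 1),
        (by omega : ((ℓ : ℤ) + 2).toNat = ℓ + 2),
        (by omega : (2 * (ℓ : ℤ) - m + 1 - ((ℓ : ℤ) + 2)).toNat = 2 * ℓ - m + 1 - (ℓ + 2))]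
    · rw [if_neg hc, qbinom, if_neg (by rintro ⟨h1, h2⟩; omega)]


end Dyson
end
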